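/- arXiv:2510.14582 — 2 statements merged into one kernel-verified Lean document; each statement's English description precedes it below -/
import Mathlib

section
/- Let G be the CPDAG of the Markov equivalence class of a DAG, and let X and Y be distinct nodes that are not adjacent in G. Then X is an explicit ancestor of Y in G if and only if X and Y are not d-separated by Pa_G(X) ∪ Sib_G(X) in the DAGs of the Markov equivalence class represented by G (the d-separation relations being the same in every DAG of the MEC). -/
/-- A directed acyclic graph on node set `V`: a directed edge relation with no
directed cycles (no edge `a → b` together with a directed path from `b` back to `a`). -/
structure Dag (V : Type*) where
  edge : V → V → Prop
  acyclic : ∀ a b : V, edge a b → ¬ Relation.ReflTransGen edge b a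

variable {V : Type*}

namespace Dag

/-- `a` is an ancestor of `b` (equivalently, `b` is a descendant of `a`):
there is a directed path from `a` to `b`; every node is its own ancestor. -/
def Anc (D : Dag V) (a b : V) : Prop := Relation.ReflTransGen D.edge a b

/-- `a` and `b` are adjacent (joined by an edge in either direction). -/
def Adj (D : Dag V) (a b : V) : Prop := D.edge a b ∨ D.edge b a

/-- The parents of `x` in the DAG `D`. -/
def Pa (D : Dag V) (x : V) : Set V := {a | D.edge a x}

/-- The Markov blanket of `x`: parents, children, and parents of children of `x`
(excluding `x` itself). -/
def MB (D : Dag V) (x : V) : Set V :=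
  {v | v ≠ x ∧ (D.edge v x ∨ D.edge x v ∨ ∃ c : V, D.edge x c ∧ D.edge v c)}

end Dag

/-- A path between `x` and `y` with respect to an adjacency relation `A`:
a sequence of distinct nodes, starting at `x` and ending at `y`, in which
consecutive nodes are adjacent. `n` is the number of edges of the path. -/
structure GPath (A : V → V → Prop) (x y : V) where
  n : ℕ
  f : Fin (n + 1) → V
  inj : Function.Injective f
  first : f ⟨0, by omega⟩ = x
  last : f ⟨n, by omega⟩ = y
  adj : ∀ i : Fin n, A (f i.castSucc) (f i.succ)

namespace GPath

/-- The non-endpoint node at position `i` of the path `p` is a collider with respect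
to the directed edge relation `E`: both incident edges of the path point into it. -/
def ColliderAt {A : V → V → Prop} {x y : V} (p : GPath A x y)
    (E : V → V → Prop) (i : ℕ) : Prop :=
  ∃ (_ : 0 < i) (_ : i < p.n),
    E (p.f ⟨i - 1, by omega⟩) (p.f ⟨i, by omega⟩) ∧
    E (p.f ⟨i + 1, by omega⟩) (p.f ⟨i, by omega⟩)

/-- The path `p` is blocked by the node set `S` in the DAG `D`: it contains a
non-collider that lies in `S`, or a collider such that neither the collider nor any
of its descendants lies in `S`. -/
def Blocked {A : V → V → Prop} {x y : V} (p : GPath A x y)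
    (D : Dag V) (S : Set V) : Prop :=
  ∃ (i : ℕ) (_ : 0 < i) (_ : i < p.n),
    (¬ p.ColliderAt D.edge i ∧ p.f ⟨i, by omega⟩ ∈ S) ∨
    (p.ColliderAt D.edge i ∧ ∀ d : V, D.Anc (p.f ⟨i, by omega⟩) d → d ∉ S)

end GPath

namespace Dag

/-- `x` and `y` are d-separated by `S` in the DAG `D`: every path between `x` and `y`
is blocked by `S`. -/
def dSep (D : Dag V) (x y : V) (S : Set V) : Prop :=
  ∀ p : GPath D.Adj x y, p.Blocked D S

/-- Two DAGs on the same node set are Markov equivalent if they have exactly the same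
d-separation relations. -/
def MEquiv (D D' : Dag V) : Prop :=
  ∀ (x y : V) (S : Set V), D.dSep x y S ↔ D'.dSep x y S

/-- The edge between `a` and `b` is directed `a → b` in the CPDAG of the Markov
equivalence class of `D`: the edge `a → b` holds in every DAG Markov equivalent to `D`. -/
def CpDir (D : Dag V) (a b : V) : Prop :=
  ∀ D' : Dag V, D.MEquiv D' → D'.edge a b

/-- The edge between `a` and `b` is undirected (`a − b`) in the CPDAG: `a` and `b` are
adjacent (the CPDAG has the same adjacencies as the DAGs of the MEC) but the edge is not
directed either way in the CPDAG. -/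
def CpUndir (D : Dag V) (a b : V) : Prop :=
  D.Adj a b ∧ ¬ D.CpDir a b ∧ ¬ D.CpDir b a

/-- `Pa_G(a)`: the nodes with a directed edge into `a` in the CPDAG. -/
def CpPa (D : Dag V) (a : V) : Set V := {p | D.CpDir p a}

/-- `Ch_G(a)`: the nodes `b` with the edge directed `a → b` in the CPDAG. -/
def CpCh (D : Dag V) (a : V) : Set V := {c | D.CpDir a c}

/-- `Sib_G(a)`: the nodes joined to `a` by an undirected edge in the CPDAG. -/
def CpSib (D : Dag V) (a : V) : Set V := {s | D.CpUndir a s}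

end Dag

namespace GPath

/-- `p` is a possibly directed path in the CPDAG: no edge on it is directed
backwards (as `V_i ← V_{i+1}`) in the CPDAG. -/
def CpPossiblyDirected {D : Dag V} {x y : V} (p : GPath D.Adj x y) : Prop :=
  ∀ i : Fin p.n, ¬ D.CpDir (p.f i.succ) (p.f i.castSucc)

/-- `p` is a (fully) directed path in the CPDAG: every edge on it is directed
forwards in the CPDAG. -/
def CpDirected {D : Dag V} {x y : V} (p : GPath D.Adj x y) : Prop :=
  ∀ i : Fin p.n, D.CpDir (p.f i.castSucc) (p.f i.succ)

/-- `p` is a directed path from `x` to `y` in the DAG `D` itself. -/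
def DirectedIn {D : Dag V} {x y : V} (p : GPath D.Adj x y) : Prop :=
  ∀ i : Fin p.n, D.edge (p.f i.castSucc) (p.f i.succ)

/-- `p` is unshielded: for every three consecutive nodes on it, the first and the
third are non-adjacent. -/
def Unshielded {D : Dag V} {x y : V} (p : GPath D.Adj x y) : Prop :=
  ∀ (i : ℕ) (_ : i + 2 ≤ p.n), ¬ D.Adj (p.f ⟨i, by omega⟩) (p.f ⟨i + 2, by omega⟩)

end GPath

namespace Dag

/-- `x` is a possible ancestor of `y` in the CPDAG: there is a possibly directed path
from `x` to `y`. -/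
def PossAn (D : Dag V) (x y : V) : Prop :=
  ∃ p : GPath D.Adj x y, p.CpPossiblyDirected

/-- `x` is an explicit ancestor of `y` in the CPDAG: there is a fully directed path
from `x` to `y` in the CPDAG. -/
def ExplAn (D : Dag V) (x y : V) : Prop :=
  ∃ p : GPath D.Adj x y, p.CpDirected

/-- The CPDAG is amenable relative to `(x, y)`: every possibly directed path from
`x` to `y` starts with a directed edge out of `x`. -/
def Amenable (D : Dag V) (x y : V) : Prop :=
  ∀ p : GPath D.Adj x y, p.CpPossiblyDirected →
    ∀ _ : 0 < p.n, D.CpDir (p.f ⟨0, by omega⟩) (p.f ⟨1, by omega⟩)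

/-- `S` is a valid adjustment set for `(x, y)` in the DAG `D`:
(i) no element of `S` is a descendant of any node `w ≠ x` lying on a directed path
from `x` to `y`, and (ii) every path between `x` and `y` that is not a directed path
from `x` to `y` is blocked by `S`. -/
def ValidAdjustment (D : Dag V) (x y : V) (S : Set V) : Prop :=
  (∀ s ∈ S, ∀ w : V, w ≠ x → D.Anc x w → D.Anc w y → ¬ D.Anc w s) ∧
  (∀ p : GPath D.Adj x y, ¬ p.DirectedIn → p.Blocked D S)

/-- `Cn_D(x, y)`: the nodes `w ≠ x` lying on some directed path from `x` to `y` in `D`. -/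
def Cn (D : Dag V) (x y : V) : Set V := {w | w ≠ x ∧ D.Anc x w ∧ D.Anc w y}

end Dag

/-!
Write `S = Pa_G(X) ∪ Sib_G(X)`. Besides the local Markov property of a DAG, the proof uses two
facts about the CPDAG, both derived from it: unshielded colliders are compelled, and a compelled
edge `a → b` followed by an undirected edge `b − c` forces `a` and `c` to be adjacent (Meek's
rule R1).

If `u` is a descendant of `X` outside `S` and `u → s` is compelled, then `s ∉ S`: otherwise `s`
is a sibling of `X` and R1 makes `u` a parent or a sibling of `X`. Hence a directed path of `G`
from `X` to `Y` is open given `S`.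

Conversely, take a shortest path from `X` to `Y` that is open given `S`. It is directed in `D`:
otherwise its first collider `w`, entered as `v → w ← z`, has a descendant in `S`. If `v` and `z`
are adjacent, skipping `w` leaves a shorter open path. If not, both arrows into `w` are compelled,
and they propagate along a shortest directed path from `w` into `S`, all of whose edges are
undirected by R1 and minimality, until they reach a sibling of `X`, where R1 puts `v` into `S`.
Finally, the path is directed in `G`: at a first undirected edge, R1 provides a chord that
shortens it.
-/

open Relation (ReflTransGen)

namespace Dag

variable {D M : Dag V} {a b c : V}

theorem not_edge_of_anc (h : D.Anc a b) : ¬ D.edge b a := fun h' => D.acyclic b a h' h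

theorem not_edge_of_edge (h : D.edge a b) : ¬ D.edge b a :=
  not_edge_of_anc (ReflTransGen.single h)

theorem edge_irrefl (a : V) : ¬ D.edge a a := fun h => not_edge_of_edge h h

theorem ne_of_edge (h : D.edge a b) : a ≠ b := by
  rintro rfl
  exact edge_irrefl a h

theorem anc_antisymm (hab : D.Anc a b) (hba : D.Anc b a) : a = b := by
  rcases ReflTransGen.cases_head hab with rfl | ⟨c, hac, hcb⟩
  · rfl
  · exact absurd hac (not_edge_of_anc (hcb.trans hba))

theorem Adj.symm (h : D.Adj a b) : D.Adj b a := Or.symm h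

theorem Adj.ne (h : D.Adj a b) : a ≠ b := h.elim ne_of_edge fun h => (ne_of_edge h).symm

theorem edge_of_adj_of_anc (h : D.Adj a b) (hab : D.Anc a b) : D.edge a b :=
  h.resolve_right (not_edge_of_anc hab)

theorem MEquiv.refl (D : Dag V) : D.MEquiv D := fun _ _ _ => Iff.rfl

theorem MEquiv.symm (h : D.MEquiv M) : M.MEquiv D := fun x y S => (h x y S).symm

theorem MEquiv.trans {M' : Dag V} (h : D.MEquiv M) (h' : M.MEquiv M') : D.MEquiv M' :=
  fun x y S => (h x y S).trans (h' x y S)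

theorem CpDir.edge (h : D.CpDir a b) : D.edge a b := h D (MEquiv.refl D)

theorem CpDir.of_mequiv (hM : D.MEquiv M) (h : M.CpDir a b) : D.CpDir a b :=
  fun _ hD' => h _ (hM.symm.trans hD')

theorem exists_mequiv_not_edge (h : ¬ D.CpDir a b) : ∃ M, D.MEquiv M ∧ ¬ M.edge a b := by
  simpa [CpDir] using h

theorem CpUndir.symm (h : D.CpUndir a b) : D.CpUndir b a := ⟨h.1.symm, h.2.2, h.2.1⟩

theorem cpDir_or_cpUndir_of_edge (h : D.edge a b) : D.CpDir a b ∨ D.CpUndir a b := by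
  by_cases hd : D.CpDir a b
  · exact Or.inl hd
  · exact Or.inr ⟨Or.inl h, hd, fun h' => not_edge_of_edge h h'.edge⟩

end Dag

/-- A `GPath` as a sequence `g : ℕ → V` (values past `n` are ignored), which makes cutting nodes
out of a path easy. -/
structure IsPathFn (A : V → V → Prop) (x y : V) (g : ℕ → V) (n : ℕ) : Prop where
  first : g 0 = x
  last : g n = y
  adj : ∀ i < n, A (g i) (g (i + 1))
  injOn : Set.InjOn g (Set.Iic n)

def dropBetween (g : ℕ → V) (k l i : ℕ) : V := g (if i ≤ k then i else i + (l - k - 1))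

theorem dropBetween_of_le {g : ℕ → V} {k l i : ℕ} (h : i ≤ k) : dropBetween g k l i = g i := by
  simp [dropBetween, h]

theorem dropBetween_of_lt {g : ℕ → V} {k l i : ℕ} (h : k < i) :
    dropBetween g k l i = g (i + (l - k - 1)) := by
  simp [dropBetween, Nat.not_le.2 h]

theorem IsPathFn.dropBetween {A : V → V → Prop} {x y : V} {g : ℕ → V} {n k l : ℕ}
    (hg : IsPathFn A x y g n) (hkl : k < l) (hl : l ≤ n) (h : A (g k) (g l)) :
    IsPathFn A x y (dropBetween g k l) (n - (l - k - 1)) where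
  first := by rw [dropBetween_of_le (Nat.zero_le k), hg.first]
  last := by
    rw [dropBetween_of_lt (by omega), ← hg.last]
    congr 1
    omega
  adj i hi := by
    obtain hik | rfl | hik := lt_trichotomy i k
    · rw [dropBetween_of_le hik.le, dropBetween_of_le hik]
      exact hg.adj i (by omega)
    · rw [dropBetween_of_le le_rfl, dropBetween_of_lt (Nat.lt_succ_self i),
        show i + 1 + (l - i - 1) = l by omega]
      exact h
    · rw [dropBetween_of_lt hik, dropBetween_of_lt (show k < i + 1 by omega),
        show i + 1 + (l - k - 1) = i + (l - k - 1) + 1 by omega]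
      exact hg.adj _ (by omega)
  injOn i hi j hj hij := by
    have mem : ∀ m ≤ n - (l - k - 1), (if m ≤ k then m else m + (l - k - 1)) ∈ Set.Iic n := by
      intro m hm
      simp only [Set.mem_Iic]
      split_ifs <;> omega
    have := hg.injOn (mem i hi) (mem j hj) hij
    split_ifs at this <;> omega

namespace Dag

def Active (D : Dag V) (S : Set V) (a b c : V) : Prop :=
  (D.edge a b ∧ D.edge c b → ∃ d, D.Anc b d ∧ d ∈ S) ∧ (¬ (D.edge a b ∧ D.edge c b) → b ∉ S)

structure IsOpenPath (D : Dag V) (S : Set V) (x y : V) (g : ℕ → V) (n : ℕ) : Prop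
    extends IsPathFn D.Adj x y g n where
  active : ∀ i, 0 < i → i < n → D.Active S (g (i - 1)) (g i) (g (i + 1))

end Dag

namespace GPath

variable {A : V → V → Prop} {x y : V}

def toFn (p : GPath A x y) (i : ℕ) : V := p.f (Fin.clamp i p.n)

theorem toFn_val (p : GPath A x y) (i : Fin (p.n + 1)) : p.toFn i = p.f i :=
  congrArg p.f (Fin.ext (min_eq_left (Nat.lt_succ_iff.mp i.2)))

theorem isPathFn_toFn (p : GPath A x y) : IsPathFn A x y p.toFn p.n where
  first := by simpa [← p.toFn_val] using p.first
  last := by simpa [← p.toFn_val] using p.last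
  adj i hi := by simpa [← p.toFn_val] using p.adj ⟨i, hi⟩
  injOn i hi j hj hij := by
    have := p.inj (a₁ := ⟨i, Nat.lt_succ_of_le hi⟩) (a₂ := ⟨j, Nat.lt_succ_of_le hj⟩)
      (by simpa [← p.toFn_val] using hij)
    simpa using this

def ofFn {g : ℕ → V} {n : ℕ} (h : IsPathFn A x y g n) : GPath A x y where
  n := n
  f i := g i
  inj i j hij := Fin.ext (h.injOn (Nat.lt_succ_iff.mp i.2) (Nat.lt_succ_iff.mp j.2) hij)
  first := h.first
  last := h.last
  adj i := h.adj i i.2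

theorem toFn_ofFn {g : ℕ → V} {n : ℕ} (h : IsPathFn A x y g n) {i : ℕ} (hi : i ≤ n) :
    (ofFn h).toFn i = g i :=
  (ofFn h).toFn_val ⟨i, Nat.lt_succ_of_le hi⟩

theorem blocked_iff (p : GPath A x y) (D : Dag V) (S : Set V) :
    p.Blocked D S ↔
      ∃ i, 0 < i ∧ i < p.n ∧ ¬ D.Active S (p.toFn (i - 1)) (p.toFn i) (p.toFn (i + 1)) := by
  simp only [Blocked, ColliderAt, Dag.Active, ← p.toFn_val]
  refine exists_congr fun i => ?_
  simp only [exists_prop]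
  refine and_congr_right fun h0 => and_congr_right fun hn => ?_
  simp only [h0, hn, true_and]
  by_cases hc : D.edge (p.toFn (i - 1)) (p.toFn i) ∧ D.edge (p.toFn (i + 1)) (p.toFn i) <;>
    simp [hc]

end GPath

namespace Dag

variable {D M : Dag V} {S : Set V} {a b c d x y : V} {g : ℕ → V} {n : ℕ}

theorem dSep_iff : D.dSep x y S ↔ ¬ ∃ g n, D.IsOpenPath S x y g n := by
  constructor
  · rintro h ⟨g, n, hg⟩
    obtain ⟨i, hi0, hin, hi⟩ := (GPath.blocked_iff _ D S).1 (h (GPath.ofFn hg.toIsPathFn))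
    change i < n at hin
    rw [GPath.toFn_ofFn _ (by omega), GPath.toFn_ofFn _ (by omega),
      GPath.toFn_ofFn _ (by omega)] at hi
    exact hi (hg.active i hi0 hin)
  · intro h p
    by_contra hp
    refine h ⟨p.toFn, p.n, p.isPathFn_toFn, fun i hi0 hin => ?_⟩
    by_contra hi
    exact hp ((GPath.blocked_iff p D S).2 ⟨i, hi0, hin, hi⟩)

theorem explAn_iff :
    D.ExplAn x y ↔ ∃ g n, IsPathFn D.Adj x y g n ∧ ∀ i < n, D.CpDir (g i) (g (i + 1)) := by
  constructor
  · rintro ⟨p, hp⟩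
    refine ⟨p.toFn, p.n, p.isPathFn_toFn, fun i hi => ?_⟩
    simpa [← p.toFn_val] using hp ⟨i, hi⟩
  · rintro ⟨g, n, hg, hcp⟩
    exact ⟨GPath.ofFn hg, fun i => hcp i i.2⟩

theorem active_of_not_mem_of_anc (hb : b ∉ S) (hbd : D.Anc b d) (hd : d ∈ S) :
    D.Active S a b c :=
  ⟨fun _ => ⟨d, hbd, hd⟩, fun _ => hb⟩

theorem active_of_collider (hab : D.edge a b) (hcb : D.edge c b) (hbd : D.Anc b d)
    (hd : d ∈ S) : D.Active S a b c :=
  ⟨fun _ => ⟨d, hbd, hd⟩, fun h => absurd ⟨hab, hcb⟩ h⟩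

theorem active_of_not_mem_of_edge (hb : b ∉ S) (hbc : D.edge b c) : D.Active S a b c :=
  ⟨fun h => absurd h.2 (not_edge_of_edge hbc), fun _ => hb⟩

theorem anc_of_forall_edge {j : ℕ} (h : ∀ i < j, D.edge (g i) (g (i + 1))) {i : ℕ}
    (hi : i ≤ j) : D.Anc (g 0) (g i) := by
  induction i with
  | zero => exact ReflTransGen.refl
  | succ i ih => exact (ih (by omega)).tail (h i (by omega))

theorem edge_pred_of_forall_edge {j : ℕ} (h : ∀ i < j, D.edge (g i) (g (i + 1))) (hj : 0 < j) :
    D.edge (g (j - 1)) (g j) := by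
  simpa [Nat.sub_add_cancel hj] using h (j - 1) (by omega)

theorem exists_maximal_directed_prefix (hg : IsPathFn D.Adj x y g n) :
    ∃ j ≤ n, (∀ i < j, D.edge (g i) (g (i + 1))) ∧ (j < n → D.edge (g (j + 1)) (g j)) := by
  classical
  have hex : ∃ j, j < n → ¬ D.edge (g j) (g (j + 1)) := ⟨n, fun h => absurd h (lt_irrefl n)⟩
  refine ⟨Nat.find hex, Nat.find_min' hex fun h => absurd h (lt_irrefl n), fun i hi => ?_,
    fun hj => (hg.adj _ hj).resolve_left (Nat.find_spec hex hj)⟩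
  have := Nat.find_min hex hi
  push Not at this
  exact this.2

namespace IsOpenPath

variable {i : ℕ}

theorem not_mem_of_edge_succ (hg : D.IsOpenPath S x y g n) (hi0 : 0 < i) (hin : i < n)
    (h : D.edge (g i) (g (i + 1))) : g i ∉ S :=
  (hg.active i hi0 hin).2 fun hc => not_edge_of_edge h hc.2

theorem not_mem_of_edge_pred (hg : D.IsOpenPath S x y g n) (hi0 : 0 < i) (hin : i < n)
    (h : D.edge (g i) (g (i - 1))) : g i ∉ S :=
  (hg.active i hi0 hin).2 fun hc => not_edge_of_edge h hc.1

theorem exists_anc_of_collider (hg : D.IsOpenPath S x y g n) (hi0 : 0 < i) (hin : i < n)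
    (h₁ : D.edge (g (i - 1)) (g i)) (h₂ : D.edge (g (i + 1)) (g i)) :
    ∃ d, D.Anc (g i) d ∧ d ∈ S :=
  (hg.active i hi0 hin).1 ⟨h₁, h₂⟩

theorem edge_zero_one (hg : D.IsOpenPath S x y g n) (hxy : ¬ D.Adj x y)
    (hS : ∀ w, D.edge w x → w ∈ S) (hn : 0 < n) : D.edge (g 0) (g 1) := by
  refine (hg.adj 0 hn).resolve_right fun h₁₀ => ?_
  obtain rfl | hn1 : n = 1 ∨ 1 < n := by omega
  · exact hxy (by simpa [hg.first, hg.last] using hg.adj 0 hn)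
  · exact hg.not_mem_of_edge_pred one_pos hn1 h₁₀ (hS _ (hg.first ▸ h₁₀))

theorem dropBetween (hg : D.IsOpenPath S x y g n) {k l : ℕ} (hkl : k < l) (hl : l ≤ n)
    (h : D.Adj (g k) (g l)) (hk : 0 < k → D.Active S (g (k - 1)) (g k) (g l))
    (hl' : l < n → D.Active S (g k) (g l) (g (l + 1))) :
    D.IsOpenPath S x y (dropBetween g k l) (n - (l - k - 1)) where
  toIsPathFn := hg.toIsPathFn.dropBetween hkl hl h
  active i hi0 hin := by
    obtain hik | rfl | hik := lt_trichotomy i k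
    · rw [dropBetween_of_le (by omega), dropBetween_of_le hik.le, dropBetween_of_le hik]
      exact hg.active i hi0 (by omega)
    · rw [dropBetween_of_le (by omega), dropBetween_of_le le_rfl,
        dropBetween_of_lt (Nat.lt_succ_self i), show i + 1 + (l - i - 1) = l by omega]
      exact hk hi0
    obtain rfl | hik := (show i = k + 1 ∨ k + 1 < i by omega)
    · rw [dropBetween_of_le (by omega), dropBetween_of_lt hik, dropBetween_of_lt (by omega),
        show k + 1 + (l - k - 1) = l by omega, show k + 1 + 1 + (l - k - 1) = l + 1 by omega]
      exact hl' (by omega)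
    · rw [dropBetween_of_lt (by omega), dropBetween_of_lt (show k < i by omega),
        dropBetween_of_lt (by omega), show i - 1 + (l - k - 1) = i + (l - k - 1) - 1 by omega,
        show i + 1 + (l - k - 1) = i + (l - k - 1) + 1 by omega]
      exact hg.active _ (by omega) (by omega)

end IsOpenPath

def IsShortestOpenPath (D : Dag V) (S : Set V) (x y : V) (g : ℕ → V) (n : ℕ) : Prop :=
  D.IsOpenPath S x y g n ∧ ∀ g' n', D.IsOpenPath S x y g' n' → n ≤ n'

theorem exists_isShortestOpenPath (h : ∃ g n, D.IsOpenPath S x y g n) :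
    ∃ g n, D.IsShortestOpenPath S x y g n := by
  classical
  have h' : ∃ n g, D.IsOpenPath S x y g n := let ⟨g, n, hg⟩ := h; ⟨n, g, hg⟩
  obtain ⟨g, hg⟩ := Nat.find_spec h'
  exact ⟨g, _, hg, fun g' n' hg' => Nat.find_min' h' ⟨g', hg'⟩⟩

theorem IsShortestOpenPath.not_adj (hg : D.IsShortestOpenPath S x y g n) {k l : ℕ}
    (hkl : k + 2 ≤ l) (hl : l ≤ n) (hk : 0 < k → D.Active S (g (k - 1)) (g k) (g l))
    (hl' : l < n → D.Active S (g k) (g l) (g (l + 1))) : ¬ D.Adj (g k) (g l) := by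
  intro h
  have := hg.2 _ _ (hg.1.dropBetween (by omega) hl h hk hl')
  omega

theorem not_dSep_of_adj (h : D.Adj a b) : ¬ D.dSep a b S := by
  rw [dSep_iff, not_not]
  refine ⟨fun i => if i = 0 then a else b, 1,
    ⟨⟨rfl, rfl, fun i hi => ?_, fun i hi j hj hij => ?_⟩, fun i hi0 hi1 => by omega⟩⟩
  · obtain rfl : i = 0 := by omega
    simpa using h
  · simp only [Set.mem_Iic] at hi hj
    interval_cases i <;> interval_cases j <;> simp_all [h.ne, h.ne.symm]

theorem not_dSep_of_collider (hab : D.edge a b) (hcb : D.edge c b) (hac : a ≠ c) (hb : b ∈ S) :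
    ¬ D.dSep a c S := by
  rw [dSep_iff, not_not]
  refine ⟨fun i => if i = 0 then a else if i = 1 then b else c, 2,
    ⟨⟨rfl, rfl, fun i hi => ?_, fun i hi j hj hij => ?_⟩, fun i hi0 hi2 => ?_⟩⟩
  · interval_cases i
    · simpa [Adj] using Or.inl hab
    · simpa [Adj] using Or.inr hcb
  · have := ne_of_edge hab
    have := ne_of_edge hcb
    simp only [Set.mem_Iic] at hi hj
    interval_cases i <;> interval_cases j <;> simp_all [eq_comm]
  · obtain rfl : i = 1 := by omega
    simpa using active_of_collider hab hcb ReflTransGen.refl hb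

theorem dSep_pa_of_not_anc (hadj : ¬ D.Adj a b) (hanc : ¬ D.Anc a b) : D.dSep a b (D.Pa a) := by
  rw [dSep_iff]
  rintro ⟨g, n, hg⟩
  obtain ⟨j, hjn, hpre, hback⟩ := exists_maximal_directed_prefix hg.toIsPathFn
  have hanc_j : D.Anc a (g j) := hg.first ▸ anc_of_forall_edge hpre le_rfl
  obtain rfl | hjn := hjn.eq_or_lt
  · exact hanc (hg.last ▸ hanc_j)
  obtain rfl | hj0 := Nat.eq_zero_or_pos j
  · exact not_edge_of_edge (hg.edge_zero_one hadj (fun _ h => h) hjn) (hback hjn)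
  obtain ⟨d, hjd, hda⟩ :=
    hg.exists_anc_of_collider hj0 hjn (edge_pred_of_forall_edge hpre hj0) (hback hjn)
  exact not_edge_of_anc (hanc_j.trans hjd) hda

theorem MEquiv.adj (hM : D.MEquiv M) (h : D.Adj a b) : M.Adj a b := by
  by_contra hM'
  by_cases hab : M.Anc a b
  · have hba : ¬ M.Anc b a := fun hba => h.ne (anc_antisymm hab hba)
    exact not_dSep_of_adj h.symm ((hM b a _).2 (dSep_pa_of_not_anc (fun h' => hM' h'.symm) hba))
  · exact not_dSep_of_adj h ((hM a b _).2 (dSep_pa_of_not_anc hM' hab))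

theorem cpDir_of_unshielded_collider (hab : D.edge a b) (hcb : D.edge c b) (hac : a ≠ c)
    (hnadj : ¬ D.Adj a c) : D.CpDir a b := by
  intro M hM
  by_contra hab'
  have hba : M.edge b a := (hM.adj (Or.inl hab)).resolve_left hab'
  have hnadj' : ¬ M.Adj a c := fun h => hnadj (hM.symm.adj h)
  by_cases hac' : M.Anc a c
  · have hca : ¬ M.Anc c a := fun h => hac (anc_antisymm hac' h)
    have hbc : M.edge b c := (hM.adj (Or.inr hcb)).resolve_right fun hcb' =>
      hca ((ReflTransGen.single hcb').tail hba)
    exact not_dSep_of_collider hcb hab hac.symm hbc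
      ((hM c a _).2 (dSep_pa_of_not_anc (fun h => hnadj' h.symm) hca))
  · exact not_dSep_of_collider hab hcb hac hba ((hM a c _).2 (dSep_pa_of_not_anc hnadj' hac'))

theorem eq_or_cpDir_or_cpUndir_of_cpDir_cpUndir (hab : D.CpDir a b) (hbc : D.CpUndir b c) :
    a = c ∨ D.CpDir a c ∨ D.CpUndir a c := by
  obtain ⟨hadj, hbc', hcb'⟩ := hbc
  obtain ⟨M₁, hM₁, hbc₁⟩ := exists_mequiv_not_edge hbc'
  obtain ⟨M₂, hM₂, hcb₂⟩ := exists_mequiv_not_edge hcb'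
  have hcb₁ : M₁.edge c b := (hM₁.adj hadj).resolve_left hbc₁
  have hbc₂ : M₂.edge b c := (hM₂.adj hadj).resolve_right hcb₂
  by_cases hac : a = c
  · exact Or.inl hac
  have hadj_ac : D.Adj a c := by
    by_contra h
    exact hcb' (CpDir.of_mequiv hM₁ (cpDir_of_unshielded_collider hcb₁ (hab M₁ hM₁)
      (Ne.symm hac) fun h' => h (hM₁.symm.adj h'.symm)))
  rcases hadj_ac with h | h
  · exact Or.inr (cpDir_or_cpUndir_of_edge h)
  · rcases cpDir_or_cpUndir_of_edge h with h | h
    · exact absurd (h M₂ hM₂)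
        (not_edge_of_anc ((ReflTransGen.single (hab M₂ hM₂)).tail hbc₂))
    · exact Or.inr (Or.inr h.symm)

theorem eq_or_adj_of_cpDir_cpUndir (hab : D.CpDir a b) (hbc : D.CpUndir b c) :
    a = c ∨ D.Adj a c :=
  (eq_or_cpDir_or_cpUndir_of_cpDir_cpUndir hab hbc).imp_right
    (Or.rec (fun h => Or.inl h.edge) (·.1))

end Dag

namespace Dag

variable {D : Dag V} {X Y b c d s u v w w' z : V} {g : ℕ → V} {n : ℕ}

theorem cpDir_of_cpUndir_of_coparent (hvb : D.CpDir v b) (hzb : D.CpDir z b)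
    (hbc : D.CpUndir b c) (he : D.edge b c) (hvz : v ≠ z) (hnadj : ¬ D.Adj v z) :
    D.CpDir v c := by
  rcases eq_or_cpDir_or_cpUndir_of_cpDir_cpUndir hvb hbc with rfl | h | hv
  · exact absurd hvb.edge (not_edge_of_edge he)
  · exact h
  rcases eq_or_cpDir_or_cpUndir_of_cpDir_cpUndir hzb hbc with rfl | hz | hz
  · exact absurd hzb.edge (not_edge_of_edge he)
  · rcases eq_or_adj_of_cpDir_cpUndir hz hv.symm with rfl | h
    · exact absurd rfl hvz
    · exact absurd h.symm hnadj
  · exact cpDir_of_unshielded_collider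
      (edge_of_adj_of_anc hv.1 ((ReflTransGen.single hvb.edge).tail he))
      (edge_of_adj_of_anc hz.1 ((ReflTransGen.single hzb.edge).tail he)) hvz hnadj

theorem not_mem_paSib_self : X ∉ D.CpPa X ∪ D.CpSib X := by
  rintro (h | h)
  · exact edge_irrefl X (CpDir.edge h)
  · exact h.1.ne rfl

theorem mem_paSib_of_edge (h : D.edge w X) : w ∈ D.CpPa X ∪ D.CpSib X :=
  (cpDir_or_cpUndir_of_edge h).imp id CpUndir.symm

theorem not_mem_paSib_of_cpDir (hu : D.Anc X u) (huS : u ∉ D.CpPa X ∪ D.CpSib X)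
    (h : D.CpDir u s) : s ∉ D.CpPa X ∪ D.CpSib X := by
  rintro (hs | hs)
  · exact not_edge_of_anc (hu.tail h.edge) (CpDir.edge hs)
  · rcases eq_or_cpDir_or_cpUndir_of_cpDir_cpUndir h (CpUndir.symm hs) with rfl | h' | h'
    · exact hs.2.1 h
    · exact not_edge_of_anc hu h'.edge
    · exact huS (Or.inr h'.symm)

theorem isOpenPath_of_forall_cpDir (hg : IsPathFn D.Adj X Y g n)
    (hcp : ∀ i < n, D.CpDir (g i) (g (i + 1))) :
    D.IsOpenPath (D.CpPa X ∪ D.CpSib X) X Y g n := by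
  have hS : ∀ i ≤ n, g i ∉ D.CpPa X ∪ D.CpSib X := by
    intro i hi
    induction i with
    | zero => exact hg.first ▸ not_mem_paSib_self
    | succ i ih =>
      exact not_mem_paSib_of_cpDir (hg.first ▸ anc_of_forall_edge (fun k hk => (hcp k hk).edge)
        (Nat.le_of_succ_le hi)) (ih (by omega)) (hcp i (by omega))
  exact ⟨hg, fun i _ hin => active_of_not_mem_of_edge (hS i hin.le) (hcp i hin).edge⟩

theorem not_dSep_of_explAn (h : D.ExplAn X Y) : ¬ D.dSep X Y (D.CpPa X ∪ D.CpSib X) := by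
  obtain ⟨g, n, hg, hcp⟩ := explAn_iff.1 h
  rw [dSep_iff, not_not]
  exact ⟨g, n, isOpenPath_of_forall_cpDir hg hcp⟩

def ReachesIn (D : Dag V) (S : Set V) : ℕ → V → Prop
  | 0, w => w ∈ S
  | n + 1, w => ∃ w', D.edge w w' ∧ D.ReachesIn S n w'

theorem exists_reachesIn_of_anc {S : Set V} (h : D.Anc w d) (hd : d ∈ S) :
    ∃ n, D.ReachesIn S n w := by
  induction h using ReflTransGen.head_induction_on with
  | refl => exact ⟨0, hd⟩
  | head hww' _ ih =>
    obtain ⟨n, hn⟩ := ih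
    exact ⟨n + 1, _, hww', hn⟩

theorem not_cpDir_of_reachesIn (hXw : D.Anc X w) (hww' : D.edge w w')
    (hw' : D.ReachesIn (D.CpPa X ∪ D.CpSib X) n w')
    (hmin : ∀ k < n + 1, ¬ D.ReachesIn (D.CpPa X ∪ D.CpSib X) k w) : ¬ D.CpDir w w' := by
  induction n generalizing w w' with
  | zero => exact fun h => not_mem_paSib_of_cpDir hXw (hmin 0 (by omega)) h hw'
  | succ n ih =>
    obtain ⟨w'', hw'w'', hw''⟩ := hw'
    have hu : D.CpUndir w' w'' := (cpDir_or_cpUndir_of_edge hw'w'').resolve_left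
      (ih (hXw.tail hww') hw'w'' hw'' fun k hk h => hmin (k + 1) (by omega) ⟨w', hww', h⟩)
    intro h
    rcases eq_or_adj_of_cpDir_cpUndir h hu with rfl | hadj
    · exact hmin n (by omega) hw''
    · exact hmin (n + 1) (by omega)
        ⟨w'', edge_of_adj_of_anc hadj ((ReflTransGen.single hww').tail hw'w''), hw''⟩

theorem not_reachesIn_of_cpDir_coparents (hXw : D.Anc X w) (hXv : D.Anc X v)
    (hv : v ∉ D.CpPa X ∪ D.CpSib X) (hvz : v ≠ z) (hnadj : ¬ D.Adj v z)
    (hvw : D.CpDir v w) (hzw : D.CpDir z w) : ¬ D.ReachesIn (D.CpPa X ∪ D.CpSib X) n w := by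
  induction n using Nat.strong_induction_on generalizing w with
  | _ n ih =>
  intro hn
  by_cases hmin : ∃ k < n, D.ReachesIn (D.CpPa X ∪ D.CpSib X) k w
  · obtain ⟨k, hk, hk'⟩ := hmin
    exact ih k hk hXw hvw hzw hk'
  push Not at hmin
  cases n with
  | zero => exact not_mem_paSib_of_cpDir hXv hv hvw hn
  | succ n =>
    obtain ⟨w', hww', hw'⟩ := hn
    have hu := (cpDir_or_cpUndir_of_edge hww').resolve_left
      (not_cpDir_of_reachesIn hXw hww' hw' hmin)
    exact ih n (by omega) (hXw.tail hww') (cpDir_of_cpUndir_of_coparent hvw hzw hu hww' hvz hnadj)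
      (cpDir_of_cpUndir_of_coparent hzw hvw hu hww' hvz.symm fun h => hnadj h.symm) hw'

namespace IsShortestOpenPath

variable (hg : D.IsShortestOpenPath (D.CpPa X ∪ D.CpSib X) X Y g n) (hXY : ¬ D.Adj X Y)
include hg hXY

theorem forall_edge : ∀ i < n, D.edge (g i) (g (i + 1)) := by
  obtain ⟨j, hjn, hpre, hback⟩ := exists_maximal_directed_prefix hg.1.toIsPathFn
  obtain rfl | hjn := hjn.eq_or_lt
  · exact hpre
  exfalso
  have hzw := hback hjn
  obtain rfl | hj0 := Nat.eq_zero_or_pos j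
  · exact not_edge_of_edge (hg.1.edge_zero_one hXY (fun _ => mem_paSib_of_edge) hjn) hzw
  have hvw := edge_pred_of_forall_edge hpre hj0
  obtain ⟨d, hwd, hd⟩ := hg.1.exists_anc_of_collider hj0 hjn hvw hzw
  have hv : g (j - 1) ∉ D.CpPa X ∪ D.CpSib X := by
    obtain h | h := (show j - 1 = 0 ∨ 0 < j - 1 by omega)
    · rw [h, hg.1.first]
      exact not_mem_paSib_self
    · exact hg.1.not_mem_of_edge_succ h (by omega) (by simpa [Nat.sub_add_cancel hj0] using hvw)
  have hvz : ¬ D.Adj (g (j - 1)) (g (j + 1)) := hg.not_adj (by omega) hjn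
    (fun _ => active_of_not_mem_of_anc hv ((ReflTransGen.single hvw).trans hwd) hd)
    (fun h => active_of_not_mem_of_anc (hg.1.not_mem_of_edge_pred (by omega) h (by simpa using hzw))
      ((ReflTransGen.single hzw).trans hwd) hd)
  have hne : g (j - 1) ≠ g (j + 1) := fun h =>
    absurd (hg.1.injOn (by simp; omega) (by simp; omega) h) (by omega)
  obtain ⟨m, hm⟩ := exists_reachesIn_of_anc hwd hd
  exact not_reachesIn_of_cpDir_coparents (hg.1.first ▸ anc_of_forall_edge hpre le_rfl)
    (hg.1.first ▸ anc_of_forall_edge hpre (by omega)) hv hne hvz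
    (cpDir_of_unshielded_collider hvw hzw hne hvz)
    (cpDir_of_unshielded_collider hzw hvw hne.symm fun h => hvz h.symm) hm

theorem forall_cpDir : ∀ i < n, D.CpDir (g i) (g (i + 1)) := by
  have hdir := hg.forall_edge hXY
  intro i
  induction i with
  | zero =>
    intro hn
    refine (cpDir_or_cpUndir_of_edge (hdir 0 hn)).resolve_right fun hu => ?_
    obtain rfl | hn1 : n = 1 ∨ 1 < n := by omega
    · exact hXY (by simpa [hg.1.first, hg.1.last] using hu.1)
    · exact hg.1.not_mem_of_edge_succ one_pos hn1 (hdir 1 hn1)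
        (Or.inr (show D.CpUndir X (g 1) by simpa [hg.1.first] using hu))
  | succ i ih =>
    intro hin
    refine (cpDir_or_cpUndir_of_edge (hdir _ hin)).resolve_right fun hu => ?_
    rcases eq_or_adj_of_cpDir_cpUndir (ih (by omega)) hu with h | h
    · exact absurd (hg.1.injOn (by simp; omega) (by simp; omega) h) (by omega)
    · refine hg.not_adj (k := i) (l := i + 2) le_rfl hin (fun hi0 => ?_) (fun hl => ?_) h
      · exact active_of_not_mem_of_edge
          (hg.1.not_mem_of_edge_succ hi0 (by omega) (hdir i (by omega)))
          (edge_of_adj_of_anc h ((ReflTransGen.single (hdir i (by omega))).tail (hdir _ hin)))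
      · exact active_of_not_mem_of_edge (hg.1.not_mem_of_edge_succ (by omega) hl (hdir _ hl))
          (hdir _ hl)

end IsShortestOpenPath

theorem dSep_paSib_of_not_explAn (hXY : ¬ D.Adj X Y) (h : ¬ D.ExplAn X Y) :
    D.dSep X Y (D.CpPa X ∪ D.CpSib X) := by
  rw [dSep_iff]
  intro hopen
  obtain ⟨g, n, hg⟩ := exists_isShortestOpenPath hopen
  exact h (explAn_iff.2 ⟨g, n, hg.1.toIsPathFn, hg.forall_cpDir hXY⟩)

end Dag

theorem explAn_iff_not_dSep_pa_union_sib_general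
    {V : Type*} (D : Dag V) (X Y : V)
    (hnadj : ¬ D.Adj X Y) :
    D.ExplAn X Y ↔
      ∀ D' : Dag V, D.MEquiv D' → ¬ D'.dSep X Y (D.CpPa X ∪ D.CpSib X) := by
  refine ⟨fun h D' hD' hsep => Dag.not_dSep_of_explAn h ((hD' X Y _).2 hsep), fun h => ?_⟩
  by_contra hE
  exact h D (Dag.MEquiv.refl D) (Dag.dSep_paSib_of_not_explAn hnadj hE)

/-- For distinct non-adjacent `X`, `Y`, `X` is an explicit ancestor of `Y`
in the CPDAG `G` of the MEC of a DAG iff `X` and `Y` are not d-separated by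
`Pa_G(X) ∪ Sib_G(X)` in the DAGs of the MEC (the d-separation relations being the same
in every DAG of the MEC). -/
theorem explAn_iff_not_dSep_pa_union_sib
    {V : Type*} [Fintype V] (D : Dag V) (X Y : V) (hXY : X ≠ Y)
    (hnadj : ¬ D.Adj X Y) :
    D.ExplAn X Y ↔
      ∀ D' : Dag V, D.MEquiv D' → ¬ D'.dSep X Y (D.CpPa X ∪ D.CpSib X) :=
  explAn_iff_not_dSep_pa_union_sib_general D X Y hnadj
end

section
/- Let G be the CPDAG of the Markov equivalence class of a DAG, let X and Y be distinct nodes, and let p be an unshielded possibly directed path from X to Y in G that is not a fully directed path in G (at least one edge of p is undirected). Then there exist DAGs D1 and D2 in the Markov equivalence class represented by G such that in D1 every edge of p is oriented from the X-end towards the Y-end (p is a directed path from X to Y in D1), while in D2 at least one edge of p is oriented towards the X-end (p is not a directed path from X to Y in D2). -/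
variable {V : Type*}

section AuxProof

variable {V : Type*}

private lemma aux_edge_ne (D : Dag V) {a b : V} (h : D.edge a b) : a ≠ b := by
  intro he; subst he
  exact D.acyclic a a h Relation.ReflTransGen.refl

private lemma aux_fcongr {n : ℕ} (f : Fin (n + 1) → V) {i j : ℕ}
    (hi : i < n + 1) (hj : j < n + 1) (h : i = j) : f ⟨i, hi⟩ = f ⟨j, hj⟩ := by
  subst h; rfl

private lemma aux_adj_ne (D : Dag V) {a b : V} (h : D.Adj a b) : a ≠ b := by
  rcases h with h | h
  · exact aux_edge_ne D h
  · exact (aux_edge_ne D h).symm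

private lemma aux_adj_symm (D : Dag V) {a b : V} (h : D.Adj a b) : D.Adj b a := h.symm

private lemma aux_anc_antisymm (D : Dag V) {a b : V} (h : D.Anc a b) (h' : D.Anc b a) :
    a = b := by
  rcases Relation.ReflTransGen.cases_head h with h0 | ⟨c, hac, hcb⟩
  · exact h0
  · exact absurd (hcb.trans h') (D.acyclic a c hac)

private lemma aux_mequiv_refl (D : Dag V) : D.MEquiv D := fun _ _ _ => Iff.rfl

private lemma aux_mequiv_symm {D D' : Dag V} (h : D.MEquiv D') : D'.MEquiv D :=
  fun x y S => (h x y S).symm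

private lemma aux_mequiv_trans {D D' D'' : Dag V} (h : D.MEquiv D') (h' : D'.MEquiv D'') :
    D.MEquiv D'' := fun x y S => (h x y S).trans (h' x y S)

/-- A single-edge path. -/
private def gpSingle {A : V → V → Prop} {a b : V} (hne : a ≠ b) (h : A a b) :
    GPath A a b where
  n := 1
  f := fun i => if (i : ℕ) = 0 then a else b
  inj := by
    intro i j hij
    fin_cases i <;> fin_cases j <;> simp_all
  first := rfl
  last := rfl
  adj := by
    intro i
    fin_cases i
    exact h

/-- A two-edge path. -/
private def gpTwo {A : V → V → Prop} {a b c : V} (hab : a ≠ b) (hbc : b ≠ c) (hac : a ≠ c)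
    (h1 : A a b) (h2 : A b c) : GPath A a c where
  n := 2
  f := fun i => if (i : ℕ) = 0 then a else if (i : ℕ) = 1 then b else c
  inj := by
    intro i j hij
    fin_cases i <;> fin_cases j <;> simp_all
  first := rfl
  last := rfl
  adj := by
    intro i
    fin_cases i
    · exact h1
    · exact h2

private lemma aux_not_dSep_of_adj (D : Dag V) {a b : V} (h : D.Adj a b) (S : Set V) :
    ¬ D.dSep a b S := by
  intro hd
  obtain ⟨i, h1, h2, _⟩ := hd (gpSingle (aux_adj_ne D h) h)
  have h2' : i < 1 := h2
  omega

private lemma aux_anc_of_chain (E : V → V → Prop) {n : ℕ} (f : Fin (n + 1) → V) :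
    ∀ k : ℕ, ∀ _ : k ≤ n,
      (∀ i, (hi : i < k) → E (f ⟨i, by omega⟩) (f ⟨i + 1, by omega⟩)) →
      Relation.ReflTransGen E (f ⟨0, by omega⟩) (f ⟨k, by omega⟩) := by
  intro k
  induction k with
  | zero => intro _ _; exact Relation.ReflTransGen.refl
  | succ m ih =>
    intro hk h
    exact Relation.ReflTransGen.tail (ih (by omega) (fun i hi => h i (by omega)))
      (h m (by omega))

private lemma aux_sep_of_not_anc (D : Dag V) {a b : V} (hne : a ≠ b) (hnadj : ¬ D.Adj a b)
    (hanc : ¬ D.Anc a b) : D.dSep a b (D.Pa a) := by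
  classical
  intro p
  have fcongr : ∀ (i j : ℕ) (hi : i < p.n + 1) (hj : j < p.n + 1), i = j →
      p.f ⟨i, hi⟩ = p.f ⟨j, hj⟩ := by
    intro i j hi hj h; subst h; rfl
  have hn0 : p.n ≠ 0 := by
    intro h
    exact hne ((p.first.symm.trans (fcongr 0 p.n (by omega) (by omega) (by omega))).trans p.last)
  have hn1 : p.n ≠ 1 := by
    intro h
    apply hnadj
    have hadj := p.adj ⟨0, by omega⟩
    have e1 : p.f (Fin.castSucc ⟨0, by omega⟩) = a := p.first
    have e2 : p.f (Fin.succ ⟨0, by omega⟩) = b :=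
      (fcongr 1 p.n (by omega) (by omega) (by omega)).trans p.last
    rw [e1, e2] at hadj
    exact hadj
  by_cases hall : ∀ i, (hi : i < p.n) → D.edge (p.f ⟨i, by omega⟩) (p.f ⟨i + 1, by omega⟩)
  · exfalso
    apply hanc
    have h := aux_anc_of_chain D.edge p.f p.n (le_refl _) hall
    have e1 : p.f (⟨0, by omega⟩ : Fin (p.n + 1)) = a := p.first
    have e2 : p.f (⟨p.n, by omega⟩ : Fin (p.n + 1)) = b := p.last
    rw [e1, e2] at h
    exact h
  · push_neg at hall
    obtain ⟨j, hjn, hje⟩ := hall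
    have hex : ∃ j, ∃ _ : j < p.n, ¬ D.edge (p.f ⟨j, by omega⟩) (p.f ⟨j + 1, by omega⟩) :=
      ⟨j, hjn, hje⟩
    obtain ⟨hkn, hke⟩ := Nat.find_spec hex
    set k := Nat.find hex with hkdef
    have hmin : ∀ i, i < k → ∀ hi : i < p.n,
        D.edge (p.f ⟨i, by omega⟩) (p.f ⟨i + 1, by omega⟩) := by
      intro i hik hi
      by_contra hc
      exact Nat.find_min hex hik ⟨hi, hc⟩
    have hback : D.edge (p.f ⟨k + 1, by omega⟩) (p.f ⟨k, by omega⟩) := by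
      rcases p.adj ⟨k, hkn⟩ with h | h
      · exact absurd h hke
      · exact h
    rcases Nat.eq_zero_or_pos k with hk0 | hk0
    · -- first edge points into a : block at index 1, noncollider in Pa a
      refine ⟨1, by omega, by omega, Or.inl ⟨?_, ?_⟩⟩
      · rintro ⟨h0, h1, hc1, hc2⟩
        apply hke
        have e1 : p.f (⟨k, by omega⟩ : Fin (p.n + 1)) = p.f ⟨0, by omega⟩ :=
          fcongr _ _ _ _ (by omega)
        have e2 : p.f (⟨k + 1, by omega⟩ : Fin (p.n + 1)) = p.f ⟨1, by omega⟩ :=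
          fcongr _ _ _ _ (by omega)
        rw [e1, e2]
        exact hc1
      · show D.edge (p.f ⟨1, by omega⟩) a
        have e1 : p.f (⟨k + 1, by omega⟩ : Fin (p.n + 1)) = p.f ⟨1, by omega⟩ :=
          fcongr _ _ _ _ (by omega)
        have e2 : p.f (⟨k, by omega⟩ : Fin (p.n + 1)) = a :=
          (fcongr k 0 (by omega) (by omega) (by omega)).trans p.first
        rw [e1, e2] at hback
        exact hback
    · -- collider at k with no descendant in Pa a
      have hanc_k : Relation.ReflTransGen D.edge a (p.f ⟨k, by omega⟩) := by
        have h := aux_anc_of_chain D.edge p.f k (by omega) (fun i hi => hmin i hi (by omega))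
        have e1 : p.f (⟨0, by omega⟩ : Fin (p.n + 1)) = a := p.first
        rw [e1] at h
        exact h
      refine ⟨k, hk0, hkn, Or.inr ⟨⟨hk0, hkn, ?_, hback⟩, ?_⟩⟩
      · have h := hmin (k - 1) (by omega) (by omega)
        have e : p.f (⟨k - 1 + 1, by omega⟩ : Fin (p.n + 1)) = p.f ⟨k, by omega⟩ :=
          fcongr _ _ _ _ (by omega)
        rw [e] at h
        exact h
      · intro d hd hdS
        have hda : D.edge d a := hdS
        exact D.acyclic d a hda (hanc_k.trans hd)

end AuxProof


section AuxProof2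

variable {V : Type*}

private lemma aux_sep_exists (D : Dag V) {a b : V} (hne : a ≠ b) (hnadj : ¬ D.Adj a b) :
    (∃ S, D.dSep a b S) ∨ (∃ S, D.dSep b a S) := by
  by_cases h : D.Anc a b
  · right
    refine ⟨D.Pa b, aux_sep_of_not_anc D hne.symm (fun hadj => hnadj (aux_adj_symm D hadj)) ?_⟩
    intro h'
    exact hne (aux_anc_antisymm D h h')
  · exact Or.inl ⟨D.Pa a, aux_sep_of_not_anc D hne hnadj h⟩

private lemma aux_adj_transfer {D D' : Dag V} (h : D.MEquiv D') {a b : V}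
    (hadj : D.Adj a b) : D'.Adj a b := by
  by_contra hn
  have hne := aux_adj_ne D hadj
  rcases aux_sep_exists D' hne hn with ⟨S, hS⟩ | ⟨S, hS⟩
  · exact aux_not_dSep_of_adj D hadj S ((h a b S).mpr hS)
  · exact aux_not_dSep_of_adj D (aux_adj_symm D hadj) S ((h b a S).mpr hS)

private lemma aux_vstruct_core {D' D'' : Dag V} (hE : D'.MEquiv D'') {a b c : V}
    (hac : a ≠ c) (h1 : D'.edge a b) (h2 : D'.edge c b) (S : Set V)
    (hsep : D''.dSep a c S) : D''.edge a b ∧ D''.edge c b := by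
  have hab : a ≠ b := aux_edge_ne D' h1
  have hcb : c ≠ b := aux_edge_ne D' h2
  have hA1 : D'.Adj a b := Or.inl h1
  have hA2 : D'.Adj b c := Or.inr h2
  have hadj1 : D''.Adj a b := aux_adj_transfer hE hA1
  have hadj2 : D''.Adj b c := aux_adj_transfer hE hA2
  have hsep' : D'.dSep a c S := (hE a c S).mpr hsep
  obtain ⟨i, hi0, hin, hblk⟩ := hsep' (gpTwo hab hcb.symm hac hA1 hA2)
  have hin' : i < 2 := hin
  have hi1 : i = 1 := by omega
  subst hi1
  have hbS : b ∉ S := by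
    rcases hblk with ⟨hnc, _⟩ | ⟨_, hdesc⟩
    · exact absurd ⟨Nat.zero_lt_one, Nat.one_lt_two, h1, h2⟩ hnc
    · exact hdesc b Relation.ReflTransGen.refl
  obtain ⟨i, hi0, hin, hblk⟩ := hsep (gpTwo hab hcb.symm hac hadj1 hadj2)
  have hin' : i < 2 := hin
  have hi1 : i = 1 := by omega
  subst hi1
  rcases hblk with ⟨_, hS⟩ | ⟨hcol'', _⟩
  · exact absurd hS hbS
  · obtain ⟨_, _, hc1, hc2⟩ := hcol''
    exact ⟨hc1, hc2⟩

private lemma aux_vstruct {D D' : Dag V} (hE : D.MEquiv D') {a b c : V}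
    (hnadj : ¬ D.Adj a c) (hac : a ≠ c) (h1 : D'.edge a b) (h2 : D'.edge c b) :
    D.CpDir a b ∧ D.CpDir c b := by
  constructor <;> intro D'' hE'' <;>
  · have hnadj'' : ¬ D''.Adj a c := fun hx => hnadj (aux_adj_transfer (aux_mequiv_symm hE'') hx)
    have hE' : D'.MEquiv D'' := aux_mequiv_trans (aux_mequiv_symm hE) hE''
    rcases aux_sep_exists D'' hac hnadj'' with ⟨S, hS⟩ | ⟨S, hS⟩
    · rcases aux_vstruct_core hE' hac h1 h2 S hS with ⟨hx, hy⟩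
      first | exact hx | exact hy
    · rcases aux_vstruct_core hE' hac.symm h2 h1 S hS with ⟨hx, hy⟩
      first | exact hx | exact hy

end AuxProof2


/-- If `p` is an unshielded possibly directed path from `X` to `Y` in the
CPDAG `G` of the MEC of a DAG that is not a fully directed path in `G`, then there are
DAGs `D1` and `D2` in the MEC represented by `G` such that in `D1` every edge of `p` is
oriented towards the `Y`-end (so `p` is a directed path from `X` to `Y` in `D1`), while
in `D2` at least one edge of `p` is oriented towards the `X`-end. -/
theorem unshielded_not_directed_two_orientations
    {V : Type*} [Fintype V] (D : Dag V) (X Y : V) (hXY : X ≠ Y)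
    (p : GPath D.Adj X Y) (hp : p.CpPossiblyDirected) (hu : p.Unshielded)
    (hnd : ¬ p.CpDirected) :
    (∃ D1 : Dag V, D.MEquiv D1 ∧ ∀ i : Fin p.n, D1.edge (p.f i.castSucc) (p.f i.succ)) ∧
      (∃ D2 : Dag V, D.MEquiv D2 ∧ ∃ i : Fin p.n, D2.edge (p.f i.succ) (p.f i.castSucc)) := by
  classical
  have hn : 0 < p.n := by
    rcases Nat.eq_zero_or_pos p.n with h | h
    · exact absurd ((p.first.symm.trans
        (aux_fcongr p.f (by omega) (by omega) (by omega))).trans p.last) hXY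
    · exact h
  have hD2 : ∃ D2 : Dag V, D.MEquiv D2 ∧
      ∃ i : Fin p.n, D2.edge (p.f i.succ) (p.f i.castSucc) := by
    rw [GPath.CpDirected] at hnd
    push_neg at hnd
    obtain ⟨i, hi⟩ := hnd
    rw [Dag.CpDir] at hi
    push_neg at hi
    obtain ⟨D2, hM, hne⟩ := hi
    rcases aux_adj_transfer hM (p.adj i) with h | h
    · exact absurd h hne
    · exact ⟨D2, hM, i, h⟩
  have h0 := hp ⟨0, hn⟩
  rw [Dag.CpDir] at h0
  push_neg at h0
  obtain ⟨D1, hM1, hne1⟩ := h0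
  have hbase : D1.edge (p.f (Fin.castSucc ⟨0, hn⟩)) (p.f (Fin.succ ⟨0, hn⟩)) := by
    rcases aux_adj_transfer hM1 (p.adj ⟨0, hn⟩) with h | h
    · exact h
    · exact absurd h hne1
  refine ⟨⟨D1, hM1, ?_⟩, hD2⟩
  have key : ∀ k : ℕ, ∀ hk : k < p.n, D1.edge (p.f ⟨k, by omega⟩) (p.f ⟨k + 1, by omega⟩) := by
    intro k
    induction k with
    | zero => intro hk; exact hbase
    | succ m ih =>
      intro hk
      have ihm := ih (by omega)
      by_contra hne2
      have hback : D1.edge (p.f ⟨m + 2, by omega⟩) (p.f ⟨m + 1, by omega⟩) := by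
        rcases aux_adj_transfer hM1 (p.adj ⟨m + 1, by omega⟩) with h | h
        · exact absurd h hne2
        · exact h
      have hnadj : ¬ D.Adj (p.f ⟨m, by omega⟩) (p.f ⟨m + 2, by omega⟩) := hu m (by omega)
      have hac : p.f ⟨m, by omega⟩ ≠ (p.f ⟨m + 2, by omega⟩ : V) := by
        intro h
        have h2 := p.inj h
        rw [Fin.mk.injEq] at h2
        omega
      have hcp := (aux_vstruct hM1 hnadj hac ihm hback).2
      exact hp ⟨m + 1, by omega⟩ hcp
  intro i
  exact key i.1 i.2
end
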